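/- arXiv:2007.09263 — 3 statements merged into one kernel-verified Lean document; each statement's English description precedes it below -/
import Mathlib

section
/- Let a12, a21, σ, λ be real numbers with σ > 0, λ > 0, a12 ≠ 0, a21 ≠ 0, and a12²a21² < 1. Set x = a12·a21, D = x^8 + 4x^6 − 6x^4 + 4x^2 + 1, assume D > 0, define γ0 = (x^4 + 8x^2 + 1)/D and γ2 = 2x(x²+1)/D, and set K = γ0²(a21²+1)(1+a12²) − (γ0²a21 + γ2a12)², assumed positive. Define the traces TI = λγ0σ²[(1+a12²) + (a21²+1)/a12²]/(σ⁴K) and TII = λγ0σ²[(1+a12²)/a21² + (a21²+1)]/(σ⁴K). Then: if a21² > a12² then TI > TII, and if a21² < a12² then TI < TII. -/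
/-- For the uniformly excited 2-node cycle, the smaller trace is obtained by the EMP
whose direct module has the larger magnitude. -/
theorem stmt_5 (a12 a21 σ lam x D γ0 γ2 K TI TII : ℝ)
    (hσ : σ > 0) (hlam : lam > 0) (ha12 : a12 ≠ 0) (ha21 : a21 ≠ 0)
    (hstab : a12^2 * a21^2 < 1)
    (hx : x = a12 * a21)
    (hD : D = x^8 + 4*x^6 - 6*x^4 + 4*x^2 + 1) (hDpos : D > 0)
    (hγ0 : γ0 = (x^4 + 8*x^2 + 1) / D)
    (hγ2 : γ2 = 2*x*(x^2 + 1) / D)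
    (hK : K = γ0^2 * (a21^2 + 1) * (1 + a12^2) - (γ0^2 * a21 + γ2 * a12)^2)
    (hKpos : K > 0)
    (hTI : TI = lam * γ0 * σ^2 * ((1 + a12^2) + (a21^2 + 1) / a12^2) / (σ^4 * K))
    (hTII : TII = lam * γ0 * σ^2 * ((1 + a12^2) / a21^2 + (a21^2 + 1)) / (σ^4 * K)) :
    (a21^2 > a12^2 → TI > TII) ∧ (a21^2 < a12^2 → TI < TII) := by
  have hγ0pos : γ0 > 0 := by
    rw [hγ0]
    positivity
  have ha12sq : (0:ℝ) < a12^2 := by positivity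
  have ha21sq : (0:ℝ) < a21^2 := by positivity
  have hden : (0:ℝ) < σ^4 * K := by positivity
  have hc : (0:ℝ) < lam * γ0 * σ^2 := by positivity
  have hA : ((1 + a12^2) + (a21^2 + 1) / a12^2) - ((1 + a12^2) / a21^2 + (a21^2 + 1))
      = ((a21^2 - a12^2) * (a21^2 + a12^2 + 1 - a12^2*a21^2)) / (a12^2 * a21^2) := by
    field_simp
    ring
  have hq : 0 < a21^2 + a12^2 + 1 - a12^2*a21^2 := by nlinarith
  constructor <;> intro h <;> rw [hTI, hTII]
  · rw [gt_iff_lt, div_lt_div_iff_of_pos_right hden, mul_lt_mul_iff_right₀ hc]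
    have : 0 < ((a21^2 - a12^2) * (a21^2 + a12^2 + 1 - a12^2*a21^2)) / (a12^2 * a21^2) :=
      div_pos (mul_pos (by linarith) hq) (by positivity)
    linarith [hA]
  · rw [div_lt_div_iff_of_pos_right hden, mul_lt_mul_iff_right₀ hc]
    have : ((a21^2 - a12^2) * (a21^2 + a12^2 + 1 - a12^2*a21^2)) / (a12^2 * a21^2) < 0 :=
      div_neg_of_neg_of_pos (mul_neg_of_neg_of_pos (by linarith) hq) (by positivity)
    linarith [hA]
end

section
/- Let a, σ1, σ2, λ2, λ3 be real numbers with σ1 > 0, σ2 > 0, λ2 > 0, λ3 > 0, and a ≠ 0. Define SI = λ3(a²/σ2² + 1/σ1²)/a² + λ3/σ2² and SII = λ2/σ1² + (a²λ2 + λ3)/(a²σ1²). Then SI = SII if and only if σ2² = (λ3/λ2)·σ1². -/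
section Field

variable {K : Type*} [Field K]

lemma add_div_sq_eq_two_mul (a s₁ s₂ l : K) (ha : a ≠ 0) :
    l * (a ^ 2 / s₂ + 1 / s₁) / a ^ 2 + l / s₂ = 2 * (l / s₂) + l / (a ^ 2 * s₁) := by
  field_simp
  ring

lemma add_mul_div_eq_two_mul (a s₁ l₂ l₃ : K) (ha : a ≠ 0) :
    l₂ / s₁ + (a ^ 2 * l₂ + l₃) / (a ^ 2 * s₁) = 2 * (l₂ / s₁) + l₃ / (a ^ 2 * s₁) := by
  by_cases hs₁ : s₁ = 0
  · simp [hs₁]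
  field_simp
  ring

lemma div_eq_div_iff_eq_div_mul {l₂ l₃ s₁ s₂ : K} (hl₂ : l₂ ≠ 0) (hs₁ : s₁ ≠ 0)
    (hs₂ : s₂ ≠ 0) : l₃ / s₂ = l₂ / s₁ ↔ s₂ = l₃ / l₂ * s₁ := by
  rw [div_eq_div_iff hs₂ hs₁, div_mul_eq_mul_div, eq_div_iff hl₂]
  constructor <;> intro h <;> linear_combination -h

end Field

theorem stmt_9_general (a σ1 σ2 lam2 lam3 SI SII : ℝ)
    (hσ1 : σ1 > 0) (hσ2 : σ2 > 0) (hlam2 : lam2 > 0) (ha : a ≠ 0)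
    (hSI : SI = lam3 * (a^2 / σ2^2 + 1 / σ1^2) / a^2 + lam3 / σ2^2)
    (hSII : SII = lam2 / σ1^2 + (a^2 * lam2 + lam3) / (a^2 * σ1^2)) :
    SI = SII ↔ σ2^2 = (lam3 / lam2) * σ1^2 := by
  rw [hSI, hSII, add_div_sq_eq_two_mul _ _ _ _ ha, add_mul_div_eq_two_mul _ _ _ _ ha,
    add_left_inj, mul_right_inj' two_ne_zero]
  exact div_eq_div_iff_eq_div_mul hlam2.ne' (pow_ne_zero 2 hσ1.ne') (pow_ne_zero 2 hσ2.ne')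

/-- For the 3-node branch with equal modules, the traces of the two minimal EMPs
coincide exactly when `σ2² = (λ3/λ2)·σ1²`. -/
theorem stmt_9 (a σ1 σ2 lam2 lam3 SI SII : ℝ)
    (hσ1 : σ1 > 0) (hσ2 : σ2 > 0) (hlam2 : lam2 > 0) (hlam3 : lam3 > 0) (ha : a ≠ 0)
    (hSI : SI = lam3 * (a^2 / σ2^2 + 1 / σ1^2) / a^2 + lam3 / σ2^2)
    (hSII : SII = lam2 / σ1^2 + (a^2 * lam2 + lam3) / (a^2 * σ1^2)) :
    SI = SII ↔ σ2^2 = (lam3 / lam2) * σ1^2 :=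
  stmt_9_general a σ1 σ2 lam2 lam3 SI SII hσ1 hσ2 hlam2 ha hSI hSII
end

section
/- Let a, σ, λ be real numbers with σ > 0, λ > 0, a ≠ 0, and set t = a². Define TI = λ/σ² + λ/σ² + (λ/σ²)(2 + 1/t²), TII = λ/(σ²t) + λ(2t+1)/(σ²(t+1)²) + λ/(σ²t), TIII = λ(t+1)/(σ²t²) + λ(t+1)/(σ²t) + λ/σ², and TIV = λ/σ² + λ(t+1)/(σ²t) + λ(t+1)/(σ²t²). Then TIII = TIV, TII < TI, and TII < TIII; that is, EMP II achieves the strictly smallest trace. -/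
/-- For the uniformly excited 4-node branch with all modules equal, EMP II (excite the
first half, measure the second half) achieves the strictly smallest trace. -/
theorem stmt_12 (a σ lam t TI TII TIII TIV : ℝ)
    (hσ : σ > 0) (hlam : lam > 0) (ha : a ≠ 0) (ht : t = a^2)
    (hTI : TI = lam / σ^2 + lam / σ^2 + (lam / σ^2) * (2 + 1 / t^2))
    (hTII : TII = lam / (σ^2 * t) + lam * (2*t + 1) / (σ^2 * (t + 1)^2) + lam / (σ^2 * t))
    (hTIII : TIII = lam * (t + 1) / (σ^2 * t^2) + lam * (t + 1) / (σ^2 * t) + lam / σ^2)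
    (hTIV : TIV = lam / σ^2 + lam * (t + 1) / (σ^2 * t) + lam * (t + 1) / (σ^2 * t^2)) :
    TIII = TIV ∧ TII < TI ∧ TII < TIII := by
  have htpos : t > 0 := by rw [ht]; positivity
  have ht0 : t ≠ 0 := ne_of_gt htpos
  have ht1 : t + 1 ≠ 0 := by positivity
  have hσ0 : σ ≠ 0 := ne_of_gt hσ
  have h1 : TI - TII = lam * (4*t^4 + 4*t^3 + 1) / (σ^2 * t^2 * (t+1)^2) := by
    rw [hTI, hTII]; field_simp; ring
  have h2 : TIII - TII = lam * (2*t^4 + 2*t^3 + 2*t^2 + 2*t + 1) / (σ^2 * t^2 * (t+1)^2) := by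
    rw [hTIII, hTII]; field_simp; ring
  have p1 : (0:ℝ) < lam * (4*t^4 + 4*t^3 + 1) / (σ^2 * t^2 * (t+1)^2) := by positivity
  have p2 : (0:ℝ) < lam * (2*t^4 + 2*t^3 + 2*t^2 + 2*t + 1) / (σ^2 * t^2 * (t+1)^2) := by positivity
  exact ⟨by rw [hTIII, hTIV]; ring, by linarith, by linarith⟩
end
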